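/- arXiv:1104.0915 — 2 statements merged into one kernel-verified Lean document; each statement's English description precedes it below -/
import Mathlib

section
/- Let (a_k) be a strictly increasing sequence of positive integers. Then the generalized discrete Hilbert transform G_a, defined by (G_a ξ)(n) = Σ_{k ≠ n} ξ_k/(a_k - a_n), is a bounded operator on ℓ²(ℕ), with norm at most that of the standard discrete Hilbert transform. -/
/-!
Let `E` place `ξ k` at position `a k` and zeros elsewhere, and let `R` read a sequence off at
the positions `a n`. Since `a` is injective, `E` is an isometry and `R` a contraction of `ℓ²`,
and `R ∘ G ∘ E` is `G_a`: its `n`-th entry is `Σ_{m ≠ a n} (E ξ) m / (m - a n)`, whose only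
nonzero terms are those with `m = a k`, `k ≠ n`. Hence `‖G_a‖ ≤ ‖R‖ ‖G‖ ‖E‖ ≤ ‖G‖`.
-/

open Function
open scoped ENNReal

variable {ι κ E : Type*} [NormedAddCommGroup E] {p : ℝ≥0∞} {a : ι → κ}

theorem norm_rpow_extend_zero (hp : 0 < p.toReal) (f : ι → E) :
    (fun j => ‖extend a f 0 j‖ ^ p.toReal) = extend a (fun i => ‖f i‖ ^ p.toReal) 0 := by
  ext j
  rw [apply_extend (‖·‖ ^ p.toReal)]
  simp [comp_def, Real.zero_rpow hp.ne', Pi.zero_def]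

theorem Memℓp.extend_zero (hp : 0 < p.toReal) (ha : Injective a) {f : ι → E}
    (hf : Memℓp f p) : Memℓp (extend a f 0) p :=
  memℓp_gen <| by
    rw [norm_rpow_extend_zero hp, summable_extend_zero ha]
    exact hf.summable hp

theorem Memℓp.comp_injective (hp : 0 < p.toReal) (ha : Injective a) {f : κ → E}
    (hf : Memℓp f p) : Memℓp (f ∘ a) p :=
  memℓp_gen <| (hf.summable hp).comp_injective ha

namespace lp

theorem norm_extend_zero (hp : 0 < p.toReal) (ha : Injective a) (f : lp (fun _ : ι => E) p) :
    ‖(⟨extend a f 0, (lp.memℓp f).extend_zero hp ha⟩ : lp (fun _ : κ => E) p)‖ = ‖f‖ := by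
  rw [norm_eq_tsum_rpow hp, norm_eq_tsum_rpow hp]
  congr 1
  exact (congrArg tsum (norm_rpow_extend_zero hp f)).trans (tsum_extend_zero ha _)

theorem norm_comp_injective_le (hp : 0 < p.toReal) (ha : Injective a)
    (f : lp (fun _ : κ => E) p) :
    ‖(⟨f ∘ a, (lp.memℓp f).comp_injective hp ha⟩ : lp (fun _ : ι => E) p)‖ ≤ ‖f‖ := by
  rw [norm_eq_tsum_rpow hp, norm_eq_tsum_rpow hp]
  gcongr
  exact tsum_comp_le_tsum_of_inj ((lp.memℓp f).summable hp) (fun _ => by positivity) ha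

variable (𝕜 : Type*) [NontriviallyNormedField 𝕜] [NormedSpace 𝕜 E] [Fact (1 ≤ p)]

noncomputable def extendByZero (hp : p ≠ ∞) (ha : Injective a) :
    lp (fun _ : ι => E) p →ₗᵢ[𝕜] lp (fun _ : κ => E) p where
  toFun f := ⟨extend a f 0, (lp.memℓp f).extend_zero (p.toReal_pos_iff_ne_top.mpr hp) ha⟩
  map_add' f g := by ext1; exact map_add (ExtendByZero.hom E a) (⇑f) g
  map_smul' c f := by ext1; simpa using extend_smul c a (⇑f) 0
  norm_map' := norm_extend_zero (p.toReal_pos_iff_ne_top.mpr hp) ha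

noncomputable def funLeft (hp : p ≠ ∞) (ha : Injective a) :
    lp (fun _ : κ => E) p →L[𝕜] lp (fun _ : ι => E) p :=
  LinearMap.mkContinuous
    { toFun f := ⟨f ∘ a, (lp.memℓp f).comp_injective (p.toReal_pos_iff_ne_top.mpr hp) ha⟩
      map_add' _ _ := rfl
      map_smul' _ _ := rfl }
    1 fun f => (one_mul ‖f‖).symm ▸ norm_comp_injective_le (p.toReal_pos_iff_ne_top.mpr hp) ha f

theorem norm_funLeft_le (hp : p ≠ ∞) (ha : Injective a) :
    ‖(funLeft 𝕜 hp ha : lp (fun _ : κ => E) p →L[𝕜] lp (fun _ : ι => E) p)‖ ≤ 1 :=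
  LinearMap.mkContinuous_norm_le _ zero_le_one _

@[simp]
theorem coe_extendByZero (hp : p ≠ ∞) (ha : Injective a) (f : lp (fun _ : ι => E) p) :
    ⇑(extendByZero 𝕜 hp ha f) = extend a f 0 := rfl

@[simp]
theorem coe_funLeft (hp : p ≠ ∞) (ha : Injective a) (f : lp (fun _ : κ => E) p) :
    ⇑(funLeft 𝕜 hp ha f) = f ∘ a := rfl

end lp

theorem tsum_subtype_ne_extend_zero_div {α : Type*} [DivisionRing α] [TopologicalSpace α]
    (ha : Injective a) (f : ι → α) (c : κ → α) (n : ι) :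
    ∑' m : {m // m ≠ a n}, extend a f 0 m / c m = ∑' k : {k // k ≠ n}, f k / c (a k) := by
  let b : {k // k ≠ n} → {m // m ≠ a n} := fun k => ⟨a k, ha.ne k.2⟩
  have hb : Injective b := fun k l h => Subtype.ext (ha (congrArg Subtype.val h))
  have hsupp : support (fun m : {m // m ≠ a n} => extend a f 0 m / c m) ⊆ Set.range b := by
    rintro ⟨m, hm⟩ hfm
    obtain ⟨k, rfl⟩ : ∃ k, a k = m := by
      by_contra h
      simp [extend_apply' _ _ _ h] at hfm
    exact ⟨⟨k, fun hk => hm (congrArg a hk)⟩, rfl⟩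
  rw [← hb.tsum_eq hsupp]
  simp [b, ha.extend_apply]

theorem stmt1_general (a : ℕ → ℕ) (ha : StrictMono a)
    (G : lp (fun _ : ℕ => ℂ) 2 →L[ℂ] lp (fun _ : ℕ => ℂ) 2)
    (hG : ∀ (ξ : lp (fun _ : ℕ => ℂ) 2) (n : ℕ),
      (G ξ : ∀ _ : ℕ, ℂ) n = ∑' k : {k : ℕ // k ≠ n}, ξ k / (((k : ℕ) : ℂ) - (n : ℂ))) :
    ∃ Ga : lp (fun _ : ℕ => ℂ) 2 →L[ℂ] lp (fun _ : ℕ => ℂ) 2,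
      ‖Ga‖ ≤ ‖G‖ ∧
      ∀ (ξ : lp (fun _ : ℕ => ℂ) 2) (n : ℕ),
        (Ga ξ : ∀ _ : ℕ, ℂ) n = ∑' k : {k : ℕ // k ≠ n}, ξ k / ((a k : ℂ) - (a n : ℂ)) := by
  let R := lp.funLeft (E := ℂ) ℂ (p := 2) ENNReal.ofNat_ne_top ha.injective
  let E := (lp.extendByZero (E := ℂ) ℂ (p := 2) ENNReal.ofNat_ne_top ha.injective)
    |>.toContinuousLinearMap
  refine ⟨R ∘L G ∘L E, ?_, fun ξ n => ?_⟩
  · calc ‖R ∘L G ∘L E‖ ≤ ‖R‖ * (‖G‖ * ‖E‖) := by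
          grw [ContinuousLinearMap.opNorm_comp_le, ContinuousLinearMap.opNorm_comp_le]
      _ ≤ 1 * (‖G‖ * 1) := by
          grw [lp.norm_funLeft_le, LinearIsometry.norm_toContinuousLinearMap_le]
      _ = ‖G‖ := by ring
  · simp only [R, E, ContinuousLinearMap.comp_apply, lp.coe_funLeft, comp_apply, hG,
      LinearIsometry.coe_toContinuousLinearMap, lp.coe_extendByZero]
    exact tsum_subtype_ne_extend_zero_div ha.injective ξ (fun m => (m : ℂ) - a n) n

/-- for a strictly increasing sequence of positive integers `a`, the
generalized discrete Hilbert transform `(G_a ξ)(n) = Σ_{k≠n} ξ_k/(a_k - a_n)` is bounded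
on ℓ²(ℕ), with norm at most that of the standard discrete Hilbert transform `G`,
`(G ξ)(n) = Σ_{k≠n} ξ_k/(k - n)`. -/
theorem stmt1 (a : ℕ → ℕ) (ha : StrictMono a) (hpos : ∀ k, 0 < a k)
    (G : lp (fun _ : ℕ => ℂ) 2 →L[ℂ] lp (fun _ : ℕ => ℂ) 2)
    (hG : ∀ (ξ : lp (fun _ : ℕ => ℂ) 2) (n : ℕ),
      (G ξ : ∀ _ : ℕ, ℂ) n = ∑' k : {k : ℕ // k ≠ n}, ξ k / (((k : ℕ) : ℂ) - (n : ℂ))) :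
    ∃ Ga : lp (fun _ : ℕ => ℂ) 2 →L[ℂ] lp (fun _ : ℕ => ℂ) 2,
      ‖Ga‖ ≤ ‖G‖ ∧
      ∀ (ξ : lp (fun _ : ℕ => ℂ) 2) (n : ℕ),
        (Ga ξ : ∀ _ : ℕ, ℂ) n = ∑' k : {k : ℕ // k ≠ n}, ξ k / ((a k : ℂ) - (a n : ℂ)) :=
  stmt1_general a ha G hG
end

section
/- Let α ∈ (0,1), c > 0, and let (t_k) be a real sequence with t_{k+1} - t_k ≥ c·k^{α-1} for all k ≥ 1. Set v = 2^{1/(1-α)}. If v^{M} ≤ m < v^{M+1} and v^{N} ≤ n-1 < v^{N+1} with M ≤ N - 2, then t_n - t_m ≥ c(1 - 1/v)·v^{αN}. -/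
/-! Summing the gaps gives `α (t_n - t_m) ≥ c (n^α - m^α)`, because each gap `c k^{α-1}` dominates
the increment `c ((k+1)^α - k^α) / α` of the concave function `x ↦ c x^α / α`. Since `n ≥ v^N` and
`m < v^{M+1} ≤ v^{N-1}`, this is at least `c v^{αN} (1 - v^{-α})`, and concavity once more gives
`1 - v^{-α} ≥ α (1 - 1/v)`. -/

namespace Real

theorem rpow_sub_rpow_le_mul_sub {a b α : ℝ} (ha : 0 < a) (hb : 0 ≤ b) (hα0 : 0 ≤ α)
    (hα1 : α ≤ 1) : b ^ α - a ^ α ≤ α * a ^ (α - 1) * (b - a) := by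
  have hbern : (b / a) ^ α ≤ 1 + α * (b / a - 1) := by
    simpa using rpow_one_add_le_one_add_mul_self (s := b / a - 1)
      (by linarith [div_nonneg hb ha.le]) hα0 hα1
  have hb_eq : b ^ α = a ^ α * (b / a) ^ α := by
    rw [← mul_rpow ha.le (div_nonneg hb ha.le), mul_div_cancel₀ b ha.ne']
  have ha_eq : a ^ (α - 1) = a ^ α / a := by rw [rpow_sub_one ha.ne']
  rw [hb_eq, ha_eq]
  calc a ^ α * (b / a) ^ α - a ^ α ≤ a ^ α * (1 + α * (b / a - 1)) - a ^ α := by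
        gcongr
    _ = α * (a ^ α / a) * (b - a) := by field_simp; ring

end Real

theorem mul_rpow_sub_rpow_le_of_gap {t : ℕ → ℝ} {c α : ℝ} (hc : 0 ≤ c) (hα0 : 0 ≤ α)
    (hα1 : α ≤ 1) (hgap : ∀ k : ℕ, 1 ≤ k → c * (k : ℝ) ^ (α - 1) ≤ t (k + 1) - t k)
    {m n : ℕ} (hm : 1 ≤ m) (hmn : m ≤ n) :
    c * ((n : ℝ) ^ α - (m : ℝ) ^ α) ≤ α * (t n - t m) := by
  induction n, hmn using Nat.le_induction with
  | base => simp
  | succ k hmk ih =>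
    have hk : (0 : ℝ) < k := by exact_mod_cast hm.trans hmk
    have hstep : ((k : ℝ) + 1) ^ α - (k : ℝ) ^ α ≤ α * (k : ℝ) ^ (α - 1) := by
      simpa using Real.rpow_sub_rpow_le_mul_sub hk (by positivity : (0 : ℝ) ≤ k + 1) hα0 hα1
    have hgap_k : α * (c * (k : ℝ) ^ (α - 1)) ≤ α * (t (k + 1) - t k) :=
      mul_le_mul_of_nonneg_left (hgap k (hm.trans hmk)) hα0
    push_cast
    linarith [mul_le_mul_of_nonneg_left hstep hc]

theorem block_separation {t : ℕ → ℝ} {c α v : ℝ} (hc : 0 ≤ c) (hα0 : 0 < α) (hα1 : α ≤ 1)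
    (hgap : ∀ k : ℕ, 1 ≤ k → c * (k : ℝ) ^ (α - 1) ≤ t (k + 1) - t k) (hv : 1 < v)
    {m n M N : ℕ} (hm : v ^ M ≤ (m : ℝ) ∧ (m : ℝ) < v ^ (M + 1)) (hn : v ^ N ≤ (n : ℝ))
    (hMN : M + 2 ≤ N) :
    c * (1 - 1 / v) * v ^ (α * N) ≤ t n - t m := by
  have hv0 : 0 < v := one_pos.trans hv
  have hm1 : 1 ≤ m := by exact_mod_cast (one_le_pow₀ hv.le).trans hm.1
  have hm_lt : (m : ℝ) < v ^ (N - 1 : ℕ) :=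
    hm.2.trans_le (pow_le_pow_right₀ hv.le (by omega))
  have hmn : m ≤ n := by
    exact_mod_cast hm_lt.le.trans ((pow_le_pow_right₀ hv.le (by omega)).trans hn)
  have hn_pow : v ^ (α * N) ≤ (n : ℝ) ^ α := by
    rw [mul_comm, Real.rpow_mul hv0.le, Real.rpow_natCast]
    exact Real.rpow_le_rpow (by positivity) hn hα0.le
  have hm_pow : (m : ℝ) ^ α ≤ v ^ (α * N) * v ^ (-α) := by
    have hexp : α * N + -α = (N - 1 : ℕ) * α := by push_cast [show 1 ≤ N by omega]; ring
    rw [← Real.rpow_add hv0, hexp, Real.rpow_mul hv0.le, Real.rpow_natCast]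
    exact Real.rpow_le_rpow (by positivity) hm_lt.le hα0.le
  have hconcave : α * (1 - 1 / v) ≤ 1 - v ^ (-α) := by
    have := Real.rpow_sub_rpow_le_mul_sub one_pos (by positivity : 0 ≤ 1 / v) hα0.le hα1
    rw [Real.div_rpow zero_le_one hv0.le, Real.one_rpow, Real.one_rpow, one_div (v ^ α),
      ← Real.rpow_neg hv0.le] at this
    linarith
  have hsum := mul_rpow_sub_rpow_le_of_gap hc hα0.le hα1 hgap hm1 hmn
  have hvN : 0 ≤ v ^ (α * N) := by positivity
  refine le_of_mul_le_mul_left ?_ hα0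
  calc α * (c * (1 - 1 / v) * v ^ (α * N))
      = c * v ^ (α * N) * (α * (1 - 1 / v)) := by ring
    _ ≤ c * v ^ (α * N) * (1 - v ^ (-α)) := by gcongr
    _ ≤ c * ((n : ℝ) ^ α - (m : ℝ) ^ α) := by
        rw [mul_assoc]; gcongr; linarith
    _ ≤ α * (t n - t m) := hsum

/-- block separation estimate. If `t_{k+1} - t_k ≥ c k^{α-1}` (α ∈ (0,1)),
`v = 2^{1/(1-α)}`, `m ∈ [v^M, v^{M+1})`, `n-1 ∈ [v^N, v^{N+1})` and `M ≤ N-2`,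
then `t_n - t_m ≥ c(1 - 1/v) v^{αN}`. -/
theorem stmt5 (α c : ℝ) (hα : 0 < α) (hα1 : α < 1) (hc : 0 < c)
    (t : ℕ → ℝ) (hgap : ∀ k : ℕ, 1 ≤ k → t (k + 1) - t k ≥ c * (k : ℝ) ^ (α - 1))
    (v : ℝ) (hv : v = 2 ^ ((1 : ℝ) / (1 - α)))
    (m n M N : ℕ)
    (hm : v ^ M ≤ (m : ℝ) ∧ (m : ℝ) < v ^ (M + 1))
    (hn : v ^ N ≤ (n : ℝ) - 1 ∧ (n : ℝ) - 1 < v ^ (N + 1))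
    (hMN : M + 2 ≤ N) :
    t n - t m ≥ c * (1 - 1 / v) * v ^ (α * (N : ℝ)) := by
  have hv1 : 1 < v := by
    rw [hv]
    exact Real.one_lt_rpow (by norm_num) (one_div_pos.mpr (sub_pos.mpr hα1))
  exact block_separation hc.le hα hα1.le hgap hv1 hm (by linarith [hn.1]) hMN
end
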